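/- Let k be a field, C a finite-dimensional k-vector space, and d : C → C a linear map with d ∘ d = 0. Let L, R, P be subspaces of C such that d(L) ≤ L, d(R) ≤ R, d(P) ≤ P, P ≤ R, and L ⊔ R = ⊤. Assume: (i) (P ⊓ ker d) ⊓ d(R) ≤ d(P) (i.e. the inclusion-induced map H(P) → H(R) on homology is injective), and (ii) P ⊓ ker d ≤ range d (i.e. the inclusion-induced map H(P) → H(C) on homology vanishes). Then, writing I := L ⊓ R, one has dim_k(I ⊓ ker d) + dim_k(d(P)) ≥ dim_k(P ⊓ ker d) + dim_k(d(I)); equivalently dim H(I) ≥ dim H(P), where for a d-invariant subspace V the homology is H(V) := (V ⊓ ker d)/d(V). -/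

import Mathlib

/-!
Write `Z(V) = V ⊓ ker d` and `B(V) = d(V)`. Since `L ⊔ R = C`, every boundary `d(l + r)` lying
in `R` is `d l + d r` with `d l ∈ Z(L ⊓ R)`, so by (ii) `Z(P) ≤ Z(I) ⊔ B(R)`; also `B(I) ≤ Z(I) ⊓ B(R)`.
Comparing `Z(P)` and `Z(I)` modulo `B(R)` by the modular law for dimensions, and bounding
`Z(P) ⊓ B(R)` by `B(P)` through (i), gives the inequality.
-/

open Module LinearMap Submodule

theorem Submodule.finrank_add_finrank_le_of_le_sup_of_le_inf {K V : Type*} [DivisionRing K]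
    [AddCommGroup V] [Module K V] [FiniteDimensional K V] {A A' B Y : Submodule K V}
    (hA : A ≤ A' ⊔ B) (hY : Y ≤ A' ⊓ B) :
    finrank K A + finrank K Y ≤ finrank K A' + finrank K ↥(A ⊓ B) := by
  have hAB := Submodule.finrank_sup_add_finrank_inf_eq A B
  have hA'B := Submodule.finrank_sup_add_finrank_inf_eq A' B
  have hsup : finrank K ↥(A ⊔ B) ≤ finrank K ↥(A' ⊔ B) :=
    Submodule.finrank_mono (sup_le hA le_sup_right)
  have hinf : finrank K Y ≤ finrank K ↥(A' ⊓ B) := Submodule.finrank_mono hY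
  omega

section Homology

variable {k C : Type*} [Field k] [AddCommGroup C] [Module k C] {d : C →ₗ[k] C}

theorem map_le_ker_of_comp_eq_zero (hd : d ∘ₗ d = 0) (V : Submodule k C) :
    V.map d ≤ ker d :=
  (LinearMap.map_le_range).trans (range_le_ker_iff.mpr hd)

theorem inf_range_le_inf_inf_ker_sup_map (hd : d ∘ₗ d = 0) {L R : Submodule k C}
    (hL : L.map d ≤ L) (hR : R.map d ≤ R) (hLR : L ⊔ R = ⊤) :
    R ⊓ range d ≤ (L ⊓ R) ⊓ ker d ⊔ R.map d := by
  rintro _ ⟨hzR, c, rfl⟩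
  obtain ⟨l, hl, r, hr, rfl⟩ := Submodule.mem_sup.mp (hLR ▸ Submodule.mem_top : c ∈ L ⊔ R)
  have hdr : d r ∈ R.map d := Submodule.mem_map_of_mem hr
  have hdlR : d l ∈ R := by
    simpa [map_add] using R.sub_mem hzR (hR hdr)
  rw [map_add]
  exact Submodule.add_mem_sup
    ⟨⟨hL (Submodule.mem_map_of_mem hl), hdlR⟩,
      map_le_ker_of_comp_eq_zero hd L (Submodule.mem_map_of_mem hl)⟩ hdr

theorem map_inf_le_inf_inf_ker_inf_map (hd : d ∘ₗ d = 0) {L R : Submodule k C}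
    (hL : L.map d ≤ L) (hR : R.map d ≤ R) :
    (L ⊓ R).map d ≤ (L ⊓ R) ⊓ ker d ⊓ R.map d :=
  le_inf (le_inf ((Submodule.map_inf_le d).trans (inf_le_inf hL hR))
    (map_le_ker_of_comp_eq_zero hd _)) (Submodule.map_mono inf_le_right)

end Homology

theorem stmt7_general {k : Type*} [Field k] {C : Type*} [AddCommGroup C] [Module k C]
    [FiniteDimensional k C]
    (d : C →ₗ[k] C) (hd : d ∘ₗ d = 0)
    (L R P : Submodule k C)
    (hL : Submodule.map d L ≤ L) (hR : Submodule.map d R ≤ R)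
    (hPR : P ≤ R) (hLR : L ⊔ R = ⊤)
    (hinj : (P ⊓ LinearMap.ker d) ⊓ Submodule.map d R ≤ Submodule.map d P)
    (hvan : P ⊓ LinearMap.ker d ≤ LinearMap.range d) :
    Module.finrank k ↥(P ⊓ LinearMap.ker d) +
        Module.finrank k ↥(Submodule.map d (L ⊓ R)) ≤
      Module.finrank k ↥((L ⊓ R) ⊓ LinearMap.ker d) +
        Module.finrank k ↥(Submodule.map d P) := by
  have hcycles : P ⊓ ker d ≤ (L ⊓ R) ⊓ ker d ⊔ R.map d :=
    (le_inf (inf_le_left.trans hPR) hvan).trans (inf_range_le_inf_inf_ker_sup_map hd hL hR hLR)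
  calc finrank k ↥(P ⊓ ker d) + finrank k ↥((L ⊓ R).map d)
      ≤ finrank k ↥((L ⊓ R) ⊓ ker d) + finrank k ↥(P ⊓ ker d ⊓ R.map d) :=
        Submodule.finrank_add_finrank_le_of_le_sup_of_le_inf hcycles
          (map_inf_le_inf_inf_ker_inf_map hd hL hR)
    _ ≤ finrank k ↥((L ⊓ R) ⊓ ker d) + finrank k ↥(P.map d) :=
        Nat.add_le_add_left (Submodule.finrank_mono hinj) _

/-- The endgame of the proof of Theorem 1.1: if the inclusion-induced map
`H(P) → H(R)` is injective while `H(P) → H(C)` vanishes, then (via Mayer--Vietoris)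
`dim H(I) ≥ dim H(P)` for `I := L ⊓ R`, stated as the equivalent inequality of
finite dimensions. -/
theorem stmt7 {k : Type*} [Field k] {C : Type*} [AddCommGroup C] [Module k C]
    [FiniteDimensional k C]
    (d : C →ₗ[k] C) (hd : d ∘ₗ d = 0)
    (L R P : Submodule k C)
    (hL : Submodule.map d L ≤ L) (hR : Submodule.map d R ≤ R)
    (hP : Submodule.map d P ≤ P) (hPR : P ≤ R) (hLR : L ⊔ R = ⊤)
    (hinj : (P ⊓ LinearMap.ker d) ⊓ Submodule.map d R ≤ Submodule.map d P)
    (hvan : P ⊓ LinearMap.ker d ≤ LinearMap.range d) :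
    Module.finrank k ↥(P ⊓ LinearMap.ker d) +
        Module.finrank k ↥(Submodule.map d (L ⊓ R)) ≤
      Module.finrank k ↥((L ⊓ R) ⊓ LinearMap.ker d) +
        Module.finrank k ↥(Submodule.map d P) :=
  stmt7_general d hd L R P hL hR hPR hLR hinj hvan
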